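/- arXiv:math/0107132 — 2 statements merged into one kernel-verified Lean document; each statement's English description precedes it below -/
import Mathlib

section
/- Let X = L¹([0,1]) be the real Lebesgue space of integrable functions on [0,1]. For every ε > 0 and every natural number n with n > 2/ε, and for every x, y in the unit sphere S(X), there exist y₁, …, yₙ ∈ l⁺(x, ε) and nonnegative reals λ₁, …, λₙ with Σ λᵢ = 1 such that y = Σ λᵢ yᵢ; that is, Daug_n(X, ε) = 0 whenever n > 2/ε. -/
open MeasureTheory

/-- For `x` in the unit sphere of `X` and `ε > 0`,
`l⁺(x, ε) = {y : ‖y‖ ≤ 1 + ε and ‖x + y‖ > 2 - ε}`. -/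
def lPlus {X : Type*} [NormedAddCommGroup X] (x : X) (ε : ℝ) : Set X :=
  {y : X | ‖y‖ ≤ 1 + ε ∧ 2 - ε < ‖x + y‖}

/-!
Cut `[0, 1]` into `n` consecutive intervals `A i` on each of which `|x|` has mass `1 / n`; this is
possible because the primitive of `|x|` is continuous. The restrictions `1_{A i} y` sum to `y` and
their norms sum to `‖y‖ = 1`, so `y` is the convex combination, with weights `‖1_{A i} y‖`, of the
normalized restrictions `z i`. Each `z i` is a unit vector supported on `A i`, where `x` has mass
only `1 / n`, hence `‖x + z i‖ ≥ ‖x‖ + ‖z i‖ - 2 / n = 2 - 2 / n > 2 - ε`.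
-/

open Set Function

section NormedSpace

variable {X : Type*} [NormedAddCommGroup X] [NormedSpace ℝ X] {x y : X} {ε : ℝ}

theorem self_mem_lPlus (hx : ‖x‖ = 1) (hε : 0 < ε) : x ∈ lPlus x ε := by
  refine ⟨by linarith, ?_⟩
  rw [← two_smul ℝ x, norm_smul, hx, Real.norm_two]
  linarith

theorem exists_lPlus_convexCombination_of_sum_norm_eq_one {ι : Type*} [Fintype ι]
    (hx : ‖x‖ = 1) (hε : 0 < ε) (g : ι → X) (hy : y = ∑ i, g i) (hg : ∑ i, ‖g i‖ = 1)
    (hgx : ∀ i, g i ≠ 0 → ‖g i‖⁻¹ • g i ∈ lPlus x ε) :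
    ∃ (z : ι → X) (lam : ι → ℝ), (∀ i, z i ∈ lPlus x ε) ∧ (∀ i, 0 ≤ lam i) ∧
      ∑ i, lam i = 1 ∧ y = ∑ i, lam i • z i := by
  classical
  refine ⟨fun i => if g i = 0 then x else ‖g i‖⁻¹ • g i, fun i => ‖g i‖, fun i => ?_,
    fun i => norm_nonneg _, hg, hy.trans (Finset.sum_congr rfl fun i _ => ?_)⟩
  · dsimp only
    split_ifs with h
    · exact self_mem_lPlus hx hε
    · exact hgx i h
  · dsimp only
    split_ifs with h
    · simp [h]
    · rw [smul_inv_smul₀ (norm_ne_zero_iff.mpr h)]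

end NormedSpace

namespace MeasureTheory

variable {α E : Type*} [MeasurableSpace α] {μ : Measure α} [NormedAddCommGroup E]

theorem L1.norm_add_sub_two_mul_setIntegral_le (x f : Lp E 1 μ) {s : Set α}
    (hs : MeasurableSet s) (hf : ∀ᵐ a ∂μ, a ∉ s → f a = 0) :
    ‖x‖ + ‖f‖ - 2 * ∫ a in s, ‖x a‖ ∂μ ≤ ‖x + f‖ := by
  have hx := (L1.integrable_coeFn x).norm
  have hf' := (L1.integrable_coeFn f).norm
  have hpt : ∀ᵐ a ∂μ, ‖x a‖ + ‖f a‖ - 2 * s.indicator (‖x ·‖) a ≤ ‖(x + f) a‖ := by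
    filter_upwards [hf, Lp.coeFn_add x f] with a hfa hxf
    rw [hxf, Pi.add_apply]
    by_cases ha : a ∈ s
    · rw [indicator_of_mem ha]
      linarith [add_sub_cancel_left (x a) (f a) ▸ norm_sub_le (x a + f a) (x a)]
    · simp [indicator_of_notMem ha, hfa ha]
  calc ‖x‖ + ‖f‖ - 2 * ∫ a in s, ‖x a‖ ∂μ
      = ∫ a, (‖x a‖ + ‖f a‖ - 2 * s.indicator (‖x ·‖) a) ∂μ := by
        rw [MeasureTheory.integral_sub (f := fun a => ‖x a‖ + ‖f a‖) (hx.add hf')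
          ((hx.indicator hs).const_mul 2), MeasureTheory.integral_add hx hf', integral_const_mul,
          integral_indicator hs, L1.norm_eq_integral_norm, L1.norm_eq_integral_norm]
    _ ≤ ∫ a, ‖(x + f) a‖ ∂μ :=
        integral_mono_ae ((hx.add hf').sub ((hx.indicator hs).const_mul 2))
          (L1.integrable_coeFn (x + f)).norm hpt
    _ = ‖x + f‖ := (L1.norm_eq_integral_norm _).symm

namespace Lp

variable {p : ENNReal}

noncomputable def indicator (f : Lp E p μ) {s : Set α} (hs : MeasurableSet s) : Lp E p μ :=
  ((Lp.memLp f).indicator hs).toLp _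

theorem coeFn_indicator (f : Lp E p μ) {s : Set α} (hs : MeasurableSet s) :
    Lp.indicator f hs =ᵐ[μ] s.indicator f :=
  MemLp.coeFn_toLp _

theorem sum_indicator_eq_self {ι : Type*} [Fintype ι] (f : Lp E p μ) {A : ι → Set α}
    (hA : ∀ i, MeasurableSet (A i)) (hdisj : Pairwise (Disjoint on A))
    (hcover : ∀ᵐ a ∂μ, ∃ i, a ∈ A i) :
    ∑ i, Lp.indicator f (hA i) = f := by
  refine Lp.ext ?_
  filter_upwards [Lp.coeFn_fun_finsetSum Finset.univ fun i => Lp.indicator f (hA i),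
    ae_all_iff.mpr fun i => coeFn_indicator f (hA i), hcover] with a hsum hind ⟨i, hi⟩
  rw [hsum, Finset.sum_congr rfl fun j _ => hind j,
    ← Finset.indicator_biUnion_apply _ _ fun j _ k _ hjk => hdisj hjk,
    indicator_of_mem (mem_iUnion₂.mpr ⟨i, Finset.mem_univ i, hi⟩)]

end Lp

theorem L1.norm_indicator (f : Lp E 1 μ) {s : Set α} (hs : MeasurableSet s) :
    ‖Lp.indicator f hs‖ = ∫ a in s, ‖f a‖ ∂μ := by
  rw [L1.norm_eq_integral_norm, ← integral_indicator hs]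
  refine integral_congr_ae ?_
  filter_upwards [Lp.coeFn_indicator f hs] with a ha
  rw [ha, norm_indicator_eq_indicator_norm]

theorem L1.sum_norm_indicator_eq_norm {ι : Type*} [Fintype ι] (f : Lp E 1 μ) {A : ι → Set α}
    (hA : ∀ i, MeasurableSet (A i)) (hdisj : Pairwise (Disjoint on A))
    (hcover : ∀ᵐ a ∂μ, ∃ i, a ∈ A i) :
    ∑ i, ‖Lp.indicator f (hA i)‖ = ‖f‖ := by
  have hunion : (⋃ i, A i : Set α) =ᵐ[μ] (univ : Set α) := by
    filter_upwards [hcover] with a ha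
    exact propext ⟨fun _ => trivial, fun _ => mem_iUnion.mpr ha⟩
  simp_rw [L1.norm_indicator]
  rw [← integral_iUnion_fintype hA hdisj fun i => (L1.integrable_coeFn f).norm.integrableOn,
    setIntegral_congr_set hunion, setIntegral_univ, L1.norm_eq_integral_norm]

theorem L1.exists_lPlus_convexCombination_of_partition [NormedSpace ℝ E] {ι : Type*} [Fintype ι]
    {x y : Lp E 1 μ} (hx : ‖x‖ = 1) (hy : ‖y‖ = 1) {ε : ℝ} (hε : 0 < ε) {A : ι → Set α}
    (hA : ∀ i, MeasurableSet (A i)) (hdisj : Pairwise (Disjoint on A))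
    (hcover : ∀ᵐ a ∂μ, ∃ i, a ∈ A i) (hsmall : ∀ i, 2 * ∫ a in A i, ‖x a‖ ∂μ < ε) :
    ∃ (z : ι → Lp E 1 μ) (lam : ι → ℝ), (∀ i, z i ∈ lPlus x ε) ∧ (∀ i, 0 ≤ lam i) ∧
      ∑ i, lam i = 1 ∧ y = ∑ i, lam i • z i := by
  refine exists_lPlus_convexCombination_of_sum_norm_eq_one hx hε (fun i => Lp.indicator y (hA i))
    (Lp.sum_indicator_eq_self y hA hdisj hcover).symm
    ((L1.sum_norm_indicator_eq_norm y hA hdisj hcover).trans hy) fun i hi => ?_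
  set g := Lp.indicator y (hA i)
  have hnorm : ‖‖g‖⁻¹ • g‖ = 1 := by
    rw [norm_smul, norm_inv, norm_norm, inv_mul_cancel₀ (norm_ne_zero_iff.mpr hi)]
  have hvanish : ∀ᵐ a ∂μ, a ∉ A i → (‖g‖⁻¹ • g) a = 0 := by
    filter_upwards [Lp.coeFn_smul ‖g‖⁻¹ g, Lp.coeFn_indicator y (hA i)] with a hsmul hind ha
    rw [hsmul, Pi.smul_apply, hind, indicator_of_notMem ha, smul_zero]
  refine ⟨by linarith, ?_⟩
  have := L1.norm_add_sub_two_mul_setIntegral_le x _ (hA i) hvanish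
  linarith [hsmall i]

end MeasureTheory

theorem ContinuousOn.exists_monotoneOn_rightInvOn {α δ : Type*}
    [ConditionallyCompleteLinearOrder α] [TopologicalSpace α] [OrderTopology α]
    [DenselyOrdered α] [LinearOrder δ] [TopologicalSpace δ] [OrderClosedTopology δ]
    {F : α → δ} {a b : α} (hab : a ≤ b) (hF : ContinuousOn F (Icc a b)) :
    ∃ r : δ → α, MonotoneOn r (Icc (F a) (F b)) ∧ MapsTo r (Icc (F a) (F b)) (Icc a b) ∧
      RightInvOn r F (Icc (F a) (F b)) ∧ r (F a) = a := by
  set S : δ → Set α := fun v => Icc a b ∩ F ⁻¹' Ici v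
  have hbdd : ∀ v, BddBelow (S v) := fun v => ⟨a, fun x hx => hx.1.1⟩
  have hne : ∀ v ∈ Icc (F a) (F b), (S v).Nonempty := fun v hv => ⟨b, ⟨hab, le_rfl⟩, hv.2⟩
  have hmem : ∀ v ∈ Icc (F a) (F b), sInf (S v) ∈ S v := fun v hv =>
    (hF.preimage_isClosed_of_isClosed isClosed_Icc isClosed_Ici).csInf_mem (hne v hv) (hbdd v)
  refine ⟨fun v => sInf (S v), fun v hv w hw hvw => ?_, fun v hv => (hmem v hv).1,
    fun v hv => ?_, ?_⟩
  · exact csInf_le_csInf (hbdd v) (hne w hw) fun x hx => ⟨hx.1, hvw.trans hx.2⟩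
  · -- `F` takes the value `v` on `[a, r v]` by the IVT, and nowhere before `r v`.
    obtain ⟨c, hc, hFc⟩ := intermediate_value_Icc (hmem v hv).1.1
      (hF.mono (Icc_subset_Icc_right (hmem v hv).1.2)) ⟨hv.1, (hmem v hv).2⟩
    have : sInf (S v) ≤ c := csInf_le (hbdd v) ⟨⟨hc.1, hc.2.trans (hmem v hv).1.2⟩, hFc.ge⟩
    rwa [le_antisymm hc.2 this] at hFc
  · have ha : a ∈ S (F a) := ⟨⟨le_rfl, hab⟩, le_rfl⟩
    exact le_antisymm (csInf_le (hbdd _) ha) (le_csInf ⟨a, ha⟩ fun x hx => hx.1.1)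

theorem exists_monotone_intervalIntegral_eq_div {μ : Measure ℝ} [NullSingletonClass μ]
    {f : ℝ → ℝ} {a b : ℝ} (hab : a ≤ b) (hf : IntegrableOn f (Icc a b) μ)
    (hf0 : 0 ≤ ∫ s in a..b, f s ∂μ) {n : ℕ} (hn : n ≠ 0) :
    ∃ t : ℕ → ℝ, Monotone t ∧ t 0 = a ∧ t n = b ∧
      ∀ i < n, ∫ s in t i..t (i + 1), f s ∂μ = (∫ s in a..b, f s ∂μ) / n := by
  set T := ∫ s in a..b, f s ∂μ
  set F : ℝ → ℝ := fun x => ∫ s in a..x, f s ∂μ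
  have hfi : IntervalIntegrable f μ a b :=
    (intervalIntegrable_iff_integrableOn_Icc_of_le hab).mpr hf
  have hFa : F a = 0 := intervalIntegral.integral_same
  obtain ⟨r, hr_mono, hr_maps, hr_inv, hr_a⟩ :=
    ContinuousOn.exists_monotoneOn_rightInvOn hab (F := F)
      (uIcc_of_le hab ▸ intervalIntegral.continuousOn_primitive_interval (by rwa [uIcc_of_le hab]))
  have hn' : (0 : ℝ) < n := by positivity
  set v : ℕ → ℝ := fun i => i * T / n
  have hv_mono : Monotone v := fun i j hij => by
    dsimp only [v]; gcongr
  have hv : ∀ i ≤ n, v i ∈ Icc (F a) (F b) := fun i hi => by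
    rw [hFa]
    refine ⟨by positivity, ?_⟩
    rw [div_le_iff₀ hn', mul_comm]
    exact mul_le_mul_of_nonneg_left (Nat.cast_le.mpr hi) hf0
  -- `r (F b)` may lie below `b`, so the last point is put at `b` by hand.
  set t : ℕ → ℝ := fun i => if i < n then r (v i) else b
  have ht_mem : ∀ i, t i ∈ Icc a b := fun i => by
    dsimp only [t]
    split_ifs with hi
    · exact hr_maps (hv i hi.le)
    · exact ⟨hab, le_rfl⟩
  have hFt : ∀ i ≤ n, F (t i) = v i := fun i hi => by
    dsimp only [t]
    split_ifs with hin
    · exact hr_inv (hv i hi)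
    · rw [le_antisymm hi (not_lt.mp hin)]
      dsimp only [v]
      field_simp
      rfl
  refine ⟨t, monotone_nat_of_le_succ fun i => ?_, ?_, if_neg (lt_irrefl n), fun i hi => ?_⟩
  · by_cases hi : i + 1 < n
    · simp only [t, if_pos hi, if_pos (Nat.lt_of_succ_lt hi)]
      exact hr_mono (hv i (by omega)) (hv (i + 1) hi.le) (hv_mono (Nat.le_succ i))
    · simp only [t, if_neg hi]
      exact (ht_mem i).2
  · simp only [t, if_pos (Nat.pos_of_ne_zero hn), v, Nat.cast_zero, zero_mul, zero_div]
    rwa [hFa] at hr_a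
  · have hint : ∀ j, IntervalIntegrable f μ a (t j) := fun j =>
      hfi.mono_set (uIcc_subset_uIcc left_mem_uIcc (by rw [uIcc_of_le hab]; exact ht_mem j))
    rw [← intervalIntegral.integral_interval_sub_left (hint (i + 1)) (hint i)]
    change F (t (i + 1)) - F (t i) = _
    rw [hFt (i + 1) hi, hFt i hi.le]
    dsimp only [v]
    push_cast
    ring

/-- In `X = L¹[0,1]`, for every `ε > 0`, every `n > 2/ε` and every `x, y` in the unit
sphere, `y` is a convex combination of `n` elements of `l⁺(x, ε)`; i.e.
`Daug_n(X, ε) = 0` whenever `n > 2/ε`. -/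
theorem L1_daugN_eq_zero
    (ε : ℝ) (hε : 0 < ε) (n : ℕ) (hn : 2 / ε < n)
    (x y : Lp ℝ 1 ((volume : Measure ℝ).restrict (Set.Icc 0 1)))
    (hx : ‖x‖ = 1) (hy : ‖y‖ = 1) :
    ∃ (z : Fin n → Lp ℝ 1 ((volume : Measure ℝ).restrict (Set.Icc 0 1)))
      (lam : Fin n → ℝ),
      (∀ i, z i ∈ lPlus x ε) ∧ (∀ i, 0 ≤ lam i) ∧
      ∑ i, lam i = 1 ∧ y = ∑ i, lam i • z i := by
  have hμ : ((volume : Measure ℝ).restrict (Icc 0 1)).restrict (Ioc 0 1) =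
      volume.restrict (Icc 0 1) := by
    rw [Measure.restrict_restrict measurableSet_Ioc, inter_eq_left.mpr Ioc_subset_Icc_self,
      Measure.restrict_congr_set Ioc_ae_eq_Icc]
  have hn0 : n ≠ 0 := by
    rintro rfl
    exact (div_pos two_pos hε).not_gt (by simpa using hn)
  have hx_int : ∫ s in (0 : ℝ)..1, ‖x s‖ ∂volume.restrict (Icc 0 1) = 1 := by
    rw [intervalIntegral.integral_of_le zero_le_one, hμ, ← L1.norm_eq_integral_norm, hx]
  obtain ⟨t, ht_mono, ht0, htn, ht_int⟩ := exists_monotone_intervalIntegral_eq_div zero_le_one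
    (L1.integrable_coeFn x).norm.integrableOn (hx_int.symm ▸ zero_le_one) hn0
  refine L1.exists_lPlus_convexCombination_of_partition hx hy hε
    (A := fun i : Fin n => Ioc (t i) (t (i + 1))) (fun _ => measurableSet_Ioc)
    (ht_mono.pairwise_disjoint_on_Ioc_succ.comp_of_injective Fin.val_injective) ?_ fun i => ?_
  · have hunion := ht_mono.biUnion_Ico_Ioc_map_succ 0 n
    rw [ht0, htn] at hunion
    have hae : ∀ᵐ a ∂volume.restrict (Icc 0 1), a ∈ Ioc (0 : ℝ) 1 := by
      rw [← hμ]
      exact ae_restrict_mem measurableSet_Ioc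
    filter_upwards [hae] with a ha
    obtain ⟨i, hi, hai⟩ := mem_iUnion₂.mp (hunion ▸ ha)
    exact ⟨⟨i, hi.2⟩, hai⟩
  · rw [← intervalIntegral.integral_of_le (ht_mono (Nat.le_succ i)), ht_int i i.2, hx_int]
    rw [div_lt_iff₀ hε] at hn
    rw [mul_one_div, div_lt_iff₀ (by positivity)]
    linarith
end

section
/- Let K be a nonempty compact Hausdorff space without isolated points and let X = C(K, ℝ) be the Banach space of continuous real-valued functions on K with the sup norm. Then for every ε > 0, every natural number n ≥ 1 and every x, y in the unit sphere S(X), there exist y₁, …, yₙ ∈ l⁺(x, ε) such that ‖y − (1/n) Σ_{i=1}^n yᵢ‖ ≤ 2/n; in particular Daug_n(X, ε) ≤ 2/n. -/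
/-- `convN n A` is the set of all convex combinations of `n`-point collections of
elements of `A`. -/
def convN {X : Type*} [AddCommGroup X] [Module ℝ X] (n : ℕ) (A : Set X) : Set X :=
  {y : X | ∃ (a : Fin n → X) (lam : Fin n → ℝ), (∀ i, a i ∈ A) ∧ (∀ i, 0 ≤ lam i) ∧
    ∑ i, lam i = 1 ∧ y = ∑ i, lam i • a i}

/-- `Daug_n(X, ε) = sup_{x, y ∈ S(X)} dist (y, conv_n (l⁺(x, ε)))`. -/
noncomputable def daugN (X : Type*) [NormedAddCommGroup X] [NormedSpace ℝ X]
    (n : ℕ) (ε : ℝ) : ℝ :=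
  sSup {d : ℝ | ∃ x y : X, ‖x‖ = 1 ∧ ‖y‖ = 1 ∧
    d = Metric.infDist y (convN n (lPlus x ε))}

open Finset in
private lemma sum_mul_prod_aux (a : ℕ → ℝ) (n : ℕ) :
    ∑ i ∈ range n, a i * ∏ j ∈ range i, (1 - a j)
      = 1 - ∏ j ∈ range n, (1 - a j) := by
  induction n with
  | zero => simp
  | succ m ih => rw [Finset.sum_range_succ, Finset.prod_range_succ, ih]; ring

private lemma convex_abs_le {a b t : ℝ} (ha : |a| ≤ 1) (hb : |b| ≤ 1) (ht0 : 0 ≤ t)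
    (ht1 : t ≤ 1) : |a + t * (b - a)| ≤ 1 := by
  rw [abs_le] at *
  constructor <;> nlinarith [ha.1, ha.2, hb.1, hb.2]

private lemma open_infinite_of_acc {K : Type*} [TopologicalSpace K] [T2Space K]
    (hK : ∀ k : K, (nhdsWithin k ({k}ᶜ : Set K)).NeBot)
    {V : Set K} (hV : IsOpen V) {k : K} (hk : k ∈ V) : V.Infinite := by
  intro hfin
  have hcl : IsClosed (V \ {k}) := (hfin.subset Set.diff_subset).isClosed
  have hopen : IsOpen ({k} : Set K) := by
    have h : ({k} : Set K) = V ∩ (V \ {k})ᶜ := by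
      ext a
      simp only [Set.mem_singleton_iff, Set.mem_inter_iff, Set.mem_compl_iff, Set.mem_diff,
        not_and, not_not]
      constructor
      · rintro rfl; exact ⟨hk, fun _ => rfl⟩
      · rintro ⟨ha, hna⟩; exact hna ha
    rw [h]; exact hV.inter hcl.isOpen_compl
  have h2 : k ∈ closure ({k}ᶜ : Set K) := mem_closure_iff_nhdsWithin_neBot.mpr (hK k)
  rcases (mem_closure_iff.mp h2) {k} hopen rfl with ⟨a, ha, hna⟩
  exact hna ha

private lemma key_construction
    {K : Type*} [TopologicalSpace K] [CompactSpace K] [T2Space K] [Nonempty K]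
    (hK : ∀ k : K, (nhdsWithin k ({k}ᶜ : Set K)).NeBot)
    {ε : ℝ} (hε : 0 < ε) {n : ℕ} (hn : 1 ≤ n) (x y : C(K, ℝ))
    (hx : ‖x‖ = 1) (hy : ‖y‖ = 1) :
    ∃ z : Fin n → C(K, ℝ), (∀ i, z i ∈ lPlus x ε) ∧
      ‖y - (n : ℝ)⁻¹ • ∑ i, z i‖ ≤ 2 / n := by
  have hn0 : (n : ℝ) ≠ 0 := by positivity
  -- norm attained at k₀
  obtain ⟨k₀, -, hk₀⟩ := isCompact_univ.exists_isMaxOn Set.univ_nonempty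
    (x.continuous.abs.continuousOn (s := Set.univ))
  set σ := x k₀ with hσdef
  have hle : ∀ k, |x k| ≤ |σ| := fun k => hk₀ (Set.mem_univ k)
  have hσ : |σ| = 1 := by
    refine le_antisymm ?_ ?_
    · rw [← hx, ← Real.norm_eq_abs]; exact x.norm_coe_le_norm k₀
    · rw [← hx]
      refine (ContinuousMap.norm_le x (abs_nonneg _)).mpr fun k => ?_
      rw [Real.norm_eq_abs]; exact hle k
  have hσσ : σ * σ = 1 := by rw [← abs_mul_abs_self, hσ]; ring
  -- the open set V
  set V : Set K := {k | 1 - ε < σ * x k} with hVdef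
  have hVopen : IsOpen V := isOpen_lt continuous_const (continuous_const.mul x.continuous)
  have hk₀V : k₀ ∈ V := by
    show 1 - ε < σ * x k₀
    rw [← hσdef, hσσ]; linarith
  have hVinf : V.Infinite := open_infinite_of_acc hK hVopen hk₀V
  -- n distinct points in V
  let e := Set.Infinite.natEmbedding V hVinf
  set p : ℕ → K := fun i => (e i : K) with hpdef
  have hpV : ∀ i, p i ∈ V := fun i => (e i).2
  have hpinj : Function.Injective p := fun i j h => e.injective (Subtype.ext h)
  -- Urysohn functions
  have hAcl : ∀ i : ℕ, IsClosed (Vᶜ ∪ p '' {j | j < n ∧ j ≠ i}) := fun i =>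
    hVopen.isClosed_compl.union
      (((Set.finite_Iio n).subset (fun j hj => hj.1)).image p).isClosed
  have hdisj : ∀ i : ℕ, Disjoint (Vᶜ ∪ p '' {j | j < n ∧ j ≠ i}) {p i} := by
    intro i
    rw [Set.disjoint_singleton_right]
    rintro (h | ⟨j, ⟨-, hj2⟩, hj3⟩)
    · exact h (hpV i)
    · exact hj2 (hpinj hj3)
  choose f hf0 hf1 hf01 using fun i : ℕ =>
    exists_continuous_zero_one_of_isClosed (hAcl i) isClosed_singleton (hdisj i)
  -- the bump functions g i with disjoint "mass"
  set g : ℕ → C(K, ℝ) := fun i => f i * ∏ j ∈ Finset.range i, (1 - f j) with hgdef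
  have hgval : ∀ i k, g i k = f i k * ∏ j ∈ Finset.range i, (1 - f j k) := by
    intro i k
    simp [hgdef, ContinuousMap.prod_apply]
  have hg0 : ∀ i k, 0 ≤ g i k := by
    intro i k
    rw [hgval]
    exact mul_nonneg (hf01 i k).1
      (Finset.prod_nonneg fun j _ => by linarith [(hf01 j k).2])
  have hg1 : ∀ i k, g i k ≤ 1 := by
    intro i k
    rw [hgval]
    refine mul_le_one₀ (hf01 i k).2
      (Finset.prod_nonneg fun j _ => by linarith [(hf01 j k).2])
      (Finset.prod_le_one (fun j _ => by linarith [(hf01 j k).2])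
        (fun j _ => by linarith [(hf01 j k).1]))
  have hgi : ∀ i : ℕ, i < n → g i (p i) = 1 := by
    intro i hi
    rw [hgval]
    have h1 : f i (p i) = 1 := hf1 i rfl
    have h2 : ∀ j ∈ Finset.range i, (1 : ℝ) - f j (p i) = 1 := by
      intro j hj
      have hji : j ≠ i := Nat.ne_of_lt (Finset.mem_range.mp hj)
      have : f j (p i) = 0 := hf0 j (Or.inr ⟨i, ⟨hi, Ne.symm hji⟩, rfl⟩)
      rw [this]; ring
    rw [h1, Finset.prod_congr rfl h2]
    simp
  have hgsum : ∀ k, ∑ i ∈ Finset.range n, g i k ≤ 1 := by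
    intro k
    have := sum_mul_prod_aux (fun i => f i k) n
    calc ∑ i ∈ Finset.range n, g i k
        = ∑ i ∈ Finset.range n, (f i k * ∏ j ∈ Finset.range i, (1 - f j k)) :=
          Finset.sum_congr rfl fun i _ => hgval i k
      _ = 1 - ∏ j ∈ Finset.range n, (1 - f j k) := this
      _ ≤ 1 := by
          have : (0:ℝ) ≤ ∏ j ∈ Finset.range n, (1 - f j k) :=
            Finset.prod_nonneg fun j _ => by linarith [(hf01 j k).2]
          linarith
  -- the functions z i
  set z : Fin n → C(K, ℝ) :=
    fun i => y + g i * (ContinuousMap.const K σ - y) with hzdef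
  have hzval : ∀ (i : Fin n) (k : K), z i k = y k + g i k * (σ - y k) := by
    intro i k; simp [hzdef]
  have hyk : ∀ k, |y k| ≤ 1 := by
    intro k; rw [← Real.norm_eq_abs, ← hy]; exact y.norm_coe_le_norm k
  refine ⟨z, fun i => ⟨?_, ?_⟩, ?_⟩
  · -- ‖z i‖ ≤ 1 + ε
    refine (ContinuousMap.norm_le _ (by linarith)).mpr fun k => ?_
    rw [Real.norm_eq_abs, hzval]
    have := convex_abs_le (hyk k) (le_of_eq hσ) (hg0 i k) (hg1 i k)
    linarith
  · -- 2 - ε < ‖x + z i‖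
    have hi : (i : ℕ) < n := i.2
    have hz1 : z i (p i) = σ := by rw [hzval, hgi i hi]; ring
    have happ : (x + z i) (p i) = x (p i) + σ := by
      rw [ContinuousMap.add_apply, hz1]
    calc 2 - ε < σ * x (p i) + 1 := by
          have := hpV i; rw [hVdef] at this; simp only [Set.mem_setOf_eq] at this; linarith
      _ = σ * (x (p i) + σ) := by rw [mul_add, hσσ]
      _ ≤ |σ * (x (p i) + σ)| := le_abs_self _
      _ = |x (p i) + σ| := by rw [abs_mul, hσ, one_mul]
      _ ≤ ‖x + z i‖ := by
          rw [← happ, ← Real.norm_eq_abs]; exact (x + z i).norm_coe_le_norm (p i)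
  · -- the averaging bound
    refine (ContinuousMap.norm_le _ (by positivity)).mpr fun k => ?_
    have hzsum : (∑ i, z i) k = (n : ℝ) * y k
        + (∑ i ∈ Finset.range n, g i k) * (σ - y k) := by
      rw [ContinuousMap.sum_apply]
      calc ∑ i : Fin n, z i k = ∑ i : Fin n, (y k + g i k * (σ - y k)) :=
            Finset.sum_congr rfl fun i _ => hzval i k
        _ = (n : ℝ) * y k + (∑ i : Fin n, g i k) * (σ - y k) := by
            rw [Finset.sum_add_distrib, ← Finset.sum_mul]
            simp [mul_comm]
        _ = (n : ℝ) * y k + (∑ i ∈ Finset.range n, g i k) * (σ - y k) := by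
            rw [Fin.sum_univ_eq_sum_range (fun i => g i k) n]
    set S := ∑ i ∈ Finset.range n, g i k with hSdef
    have hS0 : 0 ≤ S := Finset.sum_nonneg fun i _ => hg0 i k
    have hS1 : S ≤ 1 := hgsum k
    have hw : |σ - y k| ≤ 2 := by
      have := hyk k; rw [abs_le] at this ⊢
      constructor <;> [nlinarith [le_of_eq hσ, abs_nonneg σ, neg_abs_le σ];
        nlinarith [le_abs_self σ, hσ]]
    have happ : (y - (n : ℝ)⁻¹ • ∑ i, z i) k
        = -((n : ℝ)⁻¹ * (S * (σ - y k))) := by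
      rw [ContinuousMap.sub_apply, ContinuousMap.smul_apply, hzsum, smul_eq_mul]
      field_simp
      ring
    rw [Real.norm_eq_abs, happ, abs_neg, abs_mul, abs_mul,
      abs_of_nonneg (by positivity : (0:ℝ) ≤ (n:ℝ)⁻¹), abs_of_nonneg hS0]
    calc (n:ℝ)⁻¹ * (S * |σ - y k|) ≤ (n:ℝ)⁻¹ * (1 * 2) := by
          have hn' : (0:ℝ) ≤ (n:ℝ)⁻¹ := by positivity
          have : S * |σ - y k| ≤ 1 * 2 :=
            mul_le_mul hS1 hw (abs_nonneg _) zero_le_one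
          nlinarith
      _ = 2 / n := by field_simp

/-- Let `K` be a nonempty compact Hausdorff space without isolated points and
`X = C(K, ℝ)`.  For every `ε > 0`, every `n ≥ 1` and every `x, y` in the unit sphere
there are `y₁, …, yₙ ∈ l⁺(x, ε)` with `‖y - (1/n) ∑ yᵢ‖ ≤ 2/n`; in particular
`Daug_n(X, ε) ≤ 2/n`. -/
theorem CK_daugN_le
    (K : Type*) [TopologicalSpace K] [CompactSpace K] [T2Space K] [Nonempty K]
    (hK : ∀ k : K, (nhdsWithin k ({k}ᶜ : Set K)).NeBot)
    (ε : ℝ) (hε : 0 < ε) (n : ℕ) (hn : 1 ≤ n) :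
    (∀ x y : C(K, ℝ), ‖x‖ = 1 → ‖y‖ = 1 →
        ∃ z : Fin n → C(K, ℝ), (∀ i, z i ∈ lPlus x ε) ∧
          ‖y - (n : ℝ)⁻¹ • ∑ i, z i‖ ≤ 2 / n) ∧
    daugN C(K, ℝ) n ε ≤ 2 / n := by
  have hn0 : (n : ℝ) ≠ 0 := by positivity
  constructor
  · intro x y hx hy
    exact key_construction hK hε hn x y hx hy
  · rw [daugN]
    refine Real.sSup_le ?_ (by positivity)
    rintro d ⟨x, y, hx, hy, rfl⟩
    obtain ⟨z, hz, hnorm⟩ := key_construction hK hε hn x y hx hy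
    have hmem : (n : ℝ)⁻¹ • ∑ i, z i ∈ convN n (lPlus x ε) := by
      refine ⟨z, fun _ => (n : ℝ)⁻¹, hz, fun _ => by positivity, ?_, ?_⟩
      · simp [Finset.sum_const]
        field_simp
      · rw [Finset.smul_sum]
    calc Metric.infDist y (convN n (lPlus x ε))
        ≤ dist y ((n : ℝ)⁻¹ • ∑ i, z i) := Metric.infDist_le_dist_of_mem hmem
      _ = ‖y - (n : ℝ)⁻¹ • ∑ i, z i‖ := dist_eq_norm _ _
      _ ≤ 2 / n := hnorm
end
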